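/- arXiv:1404.3847 — 2 statements merged into one kernel-verified Lean document; each statement's English description precedes it below -/
import Mathlib

section
/- Let V be a finite-dimensional real vector space with a quadratic form q of signature (k, 3) with k ≥ 1, extended bilinearly to the complexification V ⊗ ℂ. For any line l ⊆ V ⊗ ℂ with q(l, l) = 0 and q(l, l̄) > 0 (for a nonzero generator), the real and imaginary parts of a generator of l span a 2-dimensional subspace of V on which q is positive definite. -/
/-! Writing `v = x + i y`, the condition `q(v, v) = 0` says `q(x, x) = q(y, y)` and `q(x, y) = 0`,
while `q(v, v̄) = q(x, x) + q(y, y)`.  So `x` and `y` are orthogonal with the same positive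
square, and `q(a x + b y) = (a² + b²) q(x, x)` is positive definite on their span; in particular
`x` and `y` are linearly independent. -/

/-- The complexification of a real bilinear form `B`, where an element
`v = Re v + i · Im v` of `V ⊗ ℂ` is encoded as the pair `(Re v, Im v) : V × V`,
and `B` is extended `ℂ`-bilinearly. -/
noncomputable def complexifiedForm {V : Type*} [AddCommGroup V] [Module ℝ V]
    (B : V →ₗ[ℝ] V →ₗ[ℝ] ℝ) (v w : V × V) : ℂ :=
  ((B v.1 w.1 - B v.2 w.2 : ℝ) : ℂ) + ((B v.1 w.2 + B v.2 w.1 : ℝ) : ℂ) * Complex.I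

/-- Complex conjugation on `V ⊗ ℂ`, in the encoding `v = (Re v, Im v)`. -/
def complexConj {V : Type*} [AddCommGroup V] [Module ℝ V] (v : V × V) : V × V :=
  (v.1, -v.2)

namespace LinearMap

section OrthogonalPair

variable {K V : Type*} [CommRing K] [AddCommGroup V] [Module K V]
  {B : V →ₗ[K] V →ₗ[K] K} {x y : V}

theorem apply_add_smul_self_of_isOrtho (hxy : B x y = 0) (hyx : B y x = 0) (a b : K) :
    B (a • x + b • y) (a • x + b • y) = a ^ 2 * B x x + b ^ 2 * B y y := by
  simp only [map_add, map_smul, add_apply, smul_apply, smul_eq_mul, hxy, hyx]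
  ring

variable [LinearOrder K] [IsStrictOrderedRing K]

theorem linearIndependent_pair_of_isOrtho (hxy : B x y = 0) (hyx : B y x = 0)
    (hx : 0 < B x x) (hy : 0 < B y y) : LinearIndependent K ![x, y] := by
  refine LinearIndependent.pair_iff.mpr fun a b hab => ?_
  have h := apply_add_smul_self_of_isOrtho hxy hyx a b
  rw [hab, map_zero] at h
  obtain ⟨ha, hb⟩ := (add_eq_zero_iff_of_nonneg (mul_nonneg (sq_nonneg a) hx.le)
    (mul_nonneg (sq_nonneg b) hy.le)).mp h.symm
  exact ⟨by simpa [hx.ne'] using ha, by simpa [hy.ne'] using hb⟩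

theorem finrank_span_pair_of_isOrtho (hxy : B x y = 0) (hyx : B y x = 0)
    (hx : 0 < B x x) (hy : 0 < B y y) :
    Module.finrank K (Submodule.span K ({x, y} : Set V)) = 2 := by
  rw [← Matrix.range_cons_cons_empty x y ![]]
  exact finrank_span_eq_card (linearIndependent_pair_of_isOrtho hxy hyx hx hy)

theorem pos_of_mem_span_pair_of_isOrtho (hxy : B x y = 0) (hyx : B y x = 0)
    (hx : 0 < B x x) (hy : 0 < B y y) {w : V} (hw : w ∈ Submodule.span K ({x, y} : Set V))
    (hw0 : w ≠ 0) : 0 < B w w := by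
  obtain ⟨a, b, rfl⟩ := Submodule.mem_span_pair.mp hw
  rw [apply_add_smul_self_of_isOrtho hxy hyx]
  have hab : a ≠ 0 ∨ b ≠ 0 := by
    by_contra! h
    simp [h.1, h.2] at hw0
  rcases hab with ha | hb
  · exact add_pos_of_pos_of_nonneg (mul_pos (sq_pos_of_ne_zero ha) hx)
      (mul_nonneg (sq_nonneg b) hy.le)
  · exact add_pos_of_nonneg_of_pos (mul_nonneg (sq_nonneg a) hx.le)
      (mul_pos (sq_pos_of_ne_zero hb) hy)

end OrthogonalPair

end LinearMap

section Complexification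

variable {V : Type*} [AddCommGroup V] [Module ℝ V] {B : V →ₗ[ℝ] V →ₗ[ℝ] ℝ}

theorem complexifiedForm_self_eq_zero_iff (hsymm : ∀ v w : V, B v w = B w v) (v : V × V) :
    complexifiedForm B v v = 0 ↔ B v.1 v.1 = B v.2 v.2 ∧ B v.1 v.2 = 0 := by
  rw [complexifiedForm, hsymm v.2 v.1, Complex.ext_iff]
  simp only [Complex.add_re, Complex.add_im, Complex.ofReal_re, Complex.ofReal_im,
    Complex.mul_re, Complex.mul_im, Complex.I_re, Complex.I_im, Complex.zero_re,
    Complex.zero_im]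
  constructor <;> rintro ⟨h₁, h₂⟩ <;> constructor <;> linarith

theorem complexifiedForm_complexConj_self (hsymm : ∀ v w : V, B v w = B w v) (v : V × V) :
    complexifiedForm B v (complexConj v) = ((B v.1 v.1 + B v.2 v.2 : ℝ) : ℂ) := by
  simp [complexifiedForm, complexConj, hsymm v.2 v.1]

end Complexification

theorem isotropic_positive_line_span_general {V : Type*} [AddCommGroup V] [Module ℝ V]
    (B : V →ₗ[ℝ] V →ₗ[ℝ] ℝ) (hsymm : ∀ v w : V, B v w = B w v)
    (v : V × V)
    (hvv : complexifiedForm B v v = 0)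
    (hvbar : ∃ r : ℝ, 0 < r ∧ complexifiedForm B v (complexConj v) = (r : ℂ)) :
    Module.finrank ℝ (Submodule.span ℝ ({v.1, v.2} : Set V)) = 2 ∧
      ∀ w ∈ Submodule.span ℝ ({v.1, v.2} : Set V), w ≠ 0 → 0 < B w w := by
  obtain ⟨r, hr, hrv⟩ := hvbar
  obtain ⟨hsq, hxy⟩ := (complexifiedForm_self_eq_zero_iff hsymm v).mp hvv
  have hyx : B v.2 v.1 = 0 := hsymm v.2 v.1 ▸ hxy
  have hsum : B v.1 v.1 + B v.2 v.2 = r := by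
    exact_mod_cast (complexifiedForm_complexConj_self hsymm v).symm.trans hrv
  have hx : 0 < B v.1 v.1 := by linarith
  have hy : 0 < B v.2 v.2 := by linarith
  exact ⟨LinearMap.finrank_span_pair_of_isOrtho hxy hyx hx hy,
    fun w hw hw0 => LinearMap.pos_of_mem_span_pair_of_isOrtho hxy hyx hx hy hw hw0⟩

/-- Let `q` be a symmetric bilinear form of signature `(k,3)`, `k ≥ 1`, on a real
vector space `V` (given by an orthogonal basis with `k` vectors of square `+1` and
`3` vectors of square `-1`).  For any generator `v = (Re v, Im v)` of a line
`l ⊆ V ⊗ ℂ` with `q(l,l) = 0` and `q(l, l̄) > 0`, the real and imaginary parts of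
`v` span a 2-dimensional subspace of `V` on which `q` is positive definite. -/
theorem isotropic_positive_line_span {V : Type*} [AddCommGroup V] [Module ℝ V]
    [FiniteDimensional ℝ V]
    (B : V →ₗ[ℝ] V →ₗ[ℝ] ℝ) (hsymm : ∀ v w : V, B v w = B w v)
    (k : ℕ) (hk : 1 ≤ k) (e : Module.Basis (Fin (k + 3)) ℝ V)
    (horth : ∀ i j, i ≠ j → B (e i) (e j) = 0)
    (hsig : ∀ i : Fin (k + 3), B (e i) (e i) = if (i : ℕ) < k then 1 else -1)
    (v : V × V) (hv : v ≠ 0)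
    (hvv : complexifiedForm B v v = 0)
    (hvbar : ∃ r : ℝ, 0 < r ∧ complexifiedForm B v (complexConj v) = (r : ℂ)) :
    Module.finrank ℝ (Submodule.span ℝ ({v.1, v.2} : Set V)) = 2 ∧
      ∀ w ∈ Submodule.span ℝ ({v.1, v.2} : Set V), w ≠ 0 → 0 < B w w :=
  isotropic_positive_line_span_general B hsymm v hvv hvbar
end

section
/- Let q be a quadratic form on H² (a finite-dimensional rational vector space) and c > 0 a constant such that for all η: ∫ η^{2n} = c·q(η,η)^n (Fujiki relation), with n ≥ 1. Then q is determined up to sign by this relation: if q' is another quadratic form with ∫ η^{2n} = c'·q'(η,η)^n for all η, with c' > 0, then q' = λ·q for some λ ∈ ℝ with λ^n = c/c'. In particular, if n is odd, λ > 0 and q' is a positive multiple of q. -/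
/-!
From `c qⁿ = c' q'ⁿ` we get `q'ⁿ = (r q)ⁿ` pointwise, where `rⁿ = c / c'` and `r > 0`, so at every
point `q' = r q`, or `q' = -r q` with `n` even. Hence the quadratic forms `q' - r q` and
`q' + r q` have identically vanishing product, and restricting to a line `u + t v` shows that
a product of two quadratic forms vanishes identically only if one of the factors does.
-/

namespace QuadraticMap

variable {K V : Type*} [Field K] [AddCommGroup V] [Module K V]

theorem apply_add_smul (Q : QuadraticForm K V) (u v : V) (t : K) :
    Q (u + t • v) = Q u + t * polar Q u v + t ^ 2 * Q v := by
  have h := polar_smul_right Q t u v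
  rw [polar, QuadraticMap.map_smul, smul_eq_mul, smul_eq_mul] at h
  linear_combination h

theorem eq_zero_or_eq_zero_of_forall_mul_eq_zero [CharZero K] {A B : QuadraticForm K V}
    (h : ∀ x, A x * B x = 0) : A = 0 ∨ B = 0 := by
  by_contra! hAB
  obtain ⟨u, hu⟩ : ∃ u, A u ≠ 0 := by simpa [QuadraticMap.ext_iff] using hAB.1
  obtain ⟨v, hv⟩ : ∃ v, B v ≠ 0 := by simpa [QuadraticMap.ext_iff] using hAB.2
  have hBu : B u = 0 := (mul_eq_zero.mp (h u)).resolve_left hu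
  have hAv : A v = 0 := (mul_eq_zero.mp (h v)).resolve_right hv
  have hline (t : K) : (A u + t * polar A u v) * (t * polar B u v + t ^ 2 * B v) = 0 := by
    simpa [apply_add_smul, hBu, hAv] using h (u + t • v)
  have e₁ := hline 1
  have e₂ := hline (-1)
  have e₃ := hline 2
  -- the cubic `hline` vanishes at `t = 1, -1, 2`; that already forces its `t³`-coefficient
  -- and then its `t²`-coefficient `A u * B v` to vanish
  have hα : polar A u v = 0 := by
    have : (6 : K) * (polar A u v * B v) = 0 := by linear_combination e₃ - 3 * e₁ - e₂
    simpa [hv] using this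
  have : (2 : K) * (A u * B v) = 0 := by linear_combination e₁ + e₂ - 2 * polar B u v * hα
  simp [hu, hv] at this

theorem eq_or_eq_neg_and_even_of_forall_pow_eq_pow [LinearOrder K] [IsStrictOrderedRing K]
    {Q S : QuadraticForm K V} {n : ℕ} (hn : n ≠ 0) (h : ∀ x, Q x ^ n = S x ^ n) :
    Q = S ∨ Q = -S ∧ Even n := by
  have hpt (x : V) := (pow_eq_pow_iff_of_ne_zero hn).1 (h x)
  have hprod (x : V) : (Q - S) x * (Q + S) x = 0 := by
    rcases hpt x with hx | ⟨hx, -⟩ <;> simp [hx]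
  rcases eq_zero_or_eq_zero_of_forall_mul_eq_zero hprod with hQS | hQS
  · exact Or.inl (sub_eq_zero.mp hQS)
  · by_cases heven : Even n
    · exact Or.inr ⟨eq_neg_of_add_eq_zero_left hQS, heven⟩
    · exact Or.inl (QuadraticMap.ext fun x => (hpt x).resolve_right fun hx => heven hx.2)

end QuadraticMap

theorem fujiki_form_unique_up_to_sign_general {V : Type*} [AddCommGroup V] [Module ℝ V]
    (n : ℕ) (hn : 1 ≤ n) (q q' : QuadraticForm ℝ V)
    (c c' : ℝ) (hc : 0 < c) (hc' : 0 < c')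
    (P : V → ℝ) (hP : ∀ η : V, P η = c * (q η) ^ n)
    (hP' : ∀ η : V, P η = c' * (q' η) ^ n) :
    ∃ l : ℝ, (∀ η : V, q' η = l * q η) ∧ l ^ n = c / c' ∧ (Odd n → 0 < l) := by
  have hn0 : n ≠ 0 := by omega
  obtain ⟨r, hr, hrn⟩ : ∃ r : ℝ, 0 < r ∧ r ^ n = c / c' :=
    ⟨(c / c') ^ (n⁻¹ : ℝ), by positivity, Real.rpow_inv_natCast_pow (by positivity) hn0⟩
  have hpow (η : V) : q' η ^ n = (r • q) η ^ n := by
    rw [smul_apply, smul_eq_mul, mul_pow, hrn]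
    field_simp
    linarith [hP η, hP' η]
  rcases QuadraticMap.eq_or_eq_neg_and_even_of_forall_pow_eq_pow hn0 hpow with h | ⟨h, heven⟩
  · exact ⟨r, fun η => by simp [h], hrn, fun _ => hr⟩
  · exact ⟨-r, fun η => by simp [h], by rw [heven.neg_pow, hrn],
      fun hodd => absurd heven (Nat.not_even_iff_odd.mpr hodd)⟩

/-- The Fujiki relation determines the quadratic form up to sign: if a homogeneous
polynomial function `P = ∫ η^{2n}` satisfies `P = c·qⁿ = c'·q'ⁿ` for nondegenerate
quadratic forms `q, q'` and positive constants `c, c'` on a finite-dimensional real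
vector space, then `q' = λ·q` with `λⁿ = c/c'`; in particular `λ > 0` when `n` is
odd. -/
theorem fujiki_form_unique_up_to_sign {V : Type*} [AddCommGroup V] [Module ℝ V]
    [FiniteDimensional ℝ V]
    (n : ℕ) (hn : 1 ≤ n) (q q' : QuadraticForm ℝ V)
    (hq : ∀ v : V, (∀ w : V, QuadraticMap.polar q v w = 0) → v = 0)
    (hq' : ∀ v : V, (∀ w : V, QuadraticMap.polar q' v w = 0) → v = 0)
    (c c' : ℝ) (hc : 0 < c) (hc' : 0 < c')
    (P : V → ℝ) (hP : ∀ η : V, P η = c * (q η) ^ n)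
    (hP' : ∀ η : V, P η = c' * (q' η) ^ n) :
    ∃ l : ℝ, (∀ η : V, q' η = l * q η) ∧ l ^ n = c / c' ∧ (Odd n → 0 < l) :=
  fujiki_form_unique_up_to_sign_general n hn q q' c c' hc hc' P hP hP'
end
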